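/- Let P = (a_1, ..., a_k) be a legal plan from the initial state I of an MA-STRIPS problem, let a_i be a private action of agent φ, and suppose that the actions a_{i+1}, ..., a_j (for some j with i < j ≤ k) all belong to agents other than φ. Then the sequence obtained from P by moving a_i to the position immediately after a_j is a legal plan from I producing the same final state as P. -/

import Mathlib

/-- A STRIPS action over a set of propositions `P`. -/
structure StripsAction (P : Type*) where
  pre : Set P
  add : Set P
  del : Set P

namespace StripsAction

variable {P : Type*}

/-- The variable set of an action: all propositions it mentions. -/
def varset (a : StripsAction P) : Set P := a.pre ∪ a.add ∪ a.del

/-- An action is applicable in state `s` iff its preconditions hold in `s`. -/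
def Applicable (a : StripsAction P) (s : Set P) : Prop := a.pre ⊆ s

/-- Applying an action to a state: `a(s) = (s \ del(a)) ∪ add(a)`. -/
def apply (a : StripsAction P) (s : Set P) : Set P := (s \ a.del) ∪ a.add

end StripsAction

/-- The state obtained by applying a sequence of actions in order. -/
def applySeq {P : Type*} : List (StripsAction P) → Set P → Set P
  | [], s => s
  | a :: rest, s => applySeq rest (a.apply s)

/-- A sequence of actions is a legal plan from `s` iff each action is applicable in the
state obtained by applying the previous ones in order. -/
def LegalPlan {P : Type*} : List (StripsAction P) → Set P → Prop
  | [], _ => True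
  | a :: rest, s => a.Applicable s ∧ LegalPlan rest (a.apply s)

/-- An MA-STRIPS problem: pairwise-disjoint finite action sets `A i` (one per agent),
an initial state and a goal. -/
structure MAProblem (P Ag : Type*) where
  A : Ag → Set (StripsAction P)
  disjoint : ∀ i j : Ag, i ≠ j → Disjoint (A i) (A j)
  finite : ∀ i : Ag, (A i).Finite
  I : Set P
  G : Set P

namespace MAProblem

variable {P Ag : Type*}

/-- Proposition `p` is private to agent `i` iff every action mentioning `p` belongs to
`A i`. -/
def PrivateProp (pb : MAProblem P Ag) (p : P) (i : Ag) : Prop :=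
  ∀ j : Ag, ∀ a ∈ pb.A j, p ∈ a.varset → j = i

/-- An action `a ∈ A i` is private iff every proposition it mentions is private to `i`. -/
def PrivateAction (pb : MAProblem P Ag) (a : StripsAction P) (i : Ag) : Prop :=
  a ∈ pb.A i ∧ ∀ p ∈ a.varset, pb.PrivateProp p i

/-- An action of the problem is public iff it is not private. -/
def PublicAction (pb : MAProblem P Ag) (a : StripsAction P) : Prop :=
  (∃ i, a ∈ pb.A i) ∧ ∀ i : Ag, ¬ pb.PrivateAction a i

end MAProblem

/-! A private action of agent `i` shares no proposition with any action of another agent.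
Actions with disjoint variable sets commute and neither affects the applicability of the
other, so `a` can be moved past the block `M` one action at a time. -/

namespace StripsAction

variable {P : Type*}

def Independent (a b : StripsAction P) : Prop := Disjoint a.varset b.varset

variable {a b : StripsAction P}

theorem Independent.apply_comm (h : a.Independent b) (s : Set P) :
    b.apply (a.apply s) = a.apply (b.apply s) := by
  ext p
  have hp : p ∈ a.varset → p ∉ b.varset := fun hpa => Set.disjoint_left.mp h hpa
  simp only [apply, varset, Set.mem_union, Set.mem_sdiff] at hp ⊢
  tauto

theorem Independent.applicable_apply (h : a.Independent b) {s : Set P}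
    (ha : a.Applicable s) : a.Applicable (b.apply s) := fun _ hp =>
  Or.inl ⟨ha hp, fun hpb => Set.disjoint_left.mp h (Or.inl (Or.inl hp)) (Or.inr hpb)⟩

theorem Independent.applicable_of_applicable_apply (h : a.Independent b) {s : Set P}
    (hb : b.Applicable (a.apply s)) : b.Applicable s := fun _ hp =>
  (hb hp).elim And.left fun hpa =>
    absurd (Or.inl (Or.inl hp)) (Set.disjoint_left.mp h (Or.inl (Or.inr hpa)))

end StripsAction

section Plans

variable {P : Type*}

theorem applySeq_append (L₁ L₂ : List (StripsAction P)) (s : Set P) :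
    applySeq (L₁ ++ L₂) s = applySeq L₂ (applySeq L₁ s) := by
  induction L₁ generalizing s with
  | nil => rfl
  | cons a L ih => exact ih _

theorem legalPlan_append (L₁ L₂ : List (StripsAction P)) (s : Set P) :
    LegalPlan (L₁ ++ L₂) s ↔ LegalPlan L₁ s ∧ LegalPlan L₂ (applySeq L₁ s) := by
  induction L₁ generalizing s with
  | nil => simp [LegalPlan, applySeq]
  | cons a L ih => simp [LegalPlan, applySeq, ih, and_assoc]

variable {a : StripsAction P} {M : List (StripsAction P)}

theorem applySeq_apply_comm (hM : ∀ b ∈ M, a.Independent b) (s : Set P) :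
    applySeq M (a.apply s) = a.apply (applySeq M s) := by
  induction M generalizing s with
  | nil => rfl
  | cons b M ih =>
    rw [List.forall_mem_cons] at hM
    simp only [applySeq]
    rw [hM.1.apply_comm, ih hM.2]

theorem applySeq_append_cons_of_independent (hM : ∀ b ∈ M, a.Independent b)
    (L : List (StripsAction P)) (s : Set P) :
    applySeq (M ++ a :: L) s = applySeq (a :: (M ++ L)) s := by
  simp only [applySeq, applySeq_append, applySeq_apply_comm hM]

theorem LegalPlan.append_cons_of_independent (hM : ∀ b ∈ M, a.Independent b)
    {L : List (StripsAction P)} {s : Set P} (h : LegalPlan (a :: (M ++ L)) s) :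
    LegalPlan (M ++ a :: L) s := by
  induction M generalizing s with
  | nil => exact h
  | cons b M ih =>
    rw [List.forall_mem_cons] at hM
    obtain ⟨ha, hb, hrest⟩ := h
    refine ⟨hM.1.applicable_of_applicable_apply hb, ih hM.2 ⟨hM.1.applicable_apply ha, ?_⟩⟩
    rwa [← hM.1.apply_comm]

end Plans

theorem MAProblem.PrivateAction.independent {P Ag : Type*} {pb : MAProblem P Ag}
    {a b : StripsAction P} {i j : Ag} (ha : pb.PrivateAction a i) (hb : b ∈ pb.A j)
    (hji : j ≠ i) : a.Independent b :=
  Set.disjoint_left.mpr fun p hpa hpb => hji (ha.2 p hpa j b hb hpb)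

theorem move_private_action_general {P Ag : Type*} (pb : MAProblem P Ag)
    (i : Ag) (a : StripsAction P) (hpriv : pb.PrivateAction a i)
    (L1 M L2 : List (StripsAction P))
    (hMother : ∀ b ∈ M, ∃ j, j ≠ i ∧ b ∈ pb.A j)
    (hlegal : LegalPlan (L1 ++ a :: (M ++ L2)) pb.I) :
    LegalPlan (L1 ++ M ++ a :: L2) pb.I ∧
      applySeq (L1 ++ M ++ a :: L2) pb.I = applySeq (L1 ++ a :: (M ++ L2)) pb.I := by
  have hindep : ∀ b ∈ M, a.Independent b := fun b hb =>
    let ⟨_, hji, hbj⟩ := hMother b hb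
    hpriv.independent hbj hji
  rw [legalPlan_append] at hlegal
  rw [List.append_assoc, legalPlan_append, applySeq_append L1, applySeq_append L1,
    applySeq_append_cons_of_independent hindep]
  exact ⟨⟨hlegal.1, hlegal.2.append_cons_of_independent hindep⟩, rfl⟩

/-- a private action `a` of agent `i` can be moved past a nonempty block `M`
of actions, all belonging to agents other than `i`, preserving legality of the plan from
`I` and its final state. -/
theorem move_private_action {P Ag : Type*} [Finite P] (pb : MAProblem P Ag)
    (i : Ag) (a : StripsAction P) (hpriv : pb.PrivateAction a i)
    (L1 M L2 : List (StripsAction P)) (hM : M ≠ [])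
    (hMother : ∀ b ∈ M, ∃ j, j ≠ i ∧ b ∈ pb.A j)
    (hmem : ∀ x ∈ L1 ++ a :: (M ++ L2), ∃ k, x ∈ pb.A k)
    (hlegal : LegalPlan (L1 ++ a :: (M ++ L2)) pb.I) :
    LegalPlan (L1 ++ M ++ a :: L2) pb.I ∧
      applySeq (L1 ++ M ++ a :: L2) pb.I = applySeq (L1 ++ a :: (M ++ L2)) pb.I :=
  move_private_action_general pb i a hpriv L1 M L2 hMother hlegal
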